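/- arXiv:2602.08493 — 12 statements merged into one kernel-verified Lean document; each statement's English description precedes it below -/
import Mathlib

section
/- Let β be a real number. Set M = !![3β², 3β; 3β, 2−β] (a symmetric 2×2 real matrix). Then for each of the three matrices V₁ = !![1+β, 0; 3β, 3], V₂ = !![1+2β, 1; 3β, 3], V₃ = !![1+3β, 2; 3β, 3] one has M * Vᵢ = Vᵢᵀ * M. Moreover det M = −3β²(1+β), so M is invertible whenever β ≠ 0 and β ≠ −1. (This is the existence of a natural dual for the jump transformation S of type [1,1,1] in Theorem 1(1).) -/
open Matrix

/-- Theorem 1(1): existence of a natural dual for the jump transformation `S`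
of type `[1,1,1]`: the symmetric matrix `M = !![3β², 3β; 3β, 2−β]`
intertwines each inverse-branch matrix with its transpose, has determinant
`−3β²(1+β)`, and is invertible whenever `β ≠ 0` and `β ≠ −1`. -/
theorem natural_dual_type_one_one_one (β : ℝ) :
    let M : Matrix (Fin 2) (Fin 2) ℝ := !![3*β^2, 3*β; 3*β, 2 - β]
    let V₁ : Matrix (Fin 2) (Fin 2) ℝ := !![1 + β, 0; 3*β, 3]
    let V₂ : Matrix (Fin 2) (Fin 2) ℝ := !![1 + 2*β, 1; 3*β, 3]
    let V₃ : Matrix (Fin 2) (Fin 2) ℝ := !![1 + 3*β, 2; 3*β, 3]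
    M.IsSymm ∧
    M * V₁ = V₁ᵀ * M ∧ M * V₂ = V₂ᵀ * M ∧ M * V₃ = V₃ᵀ * M ∧
    M.det = -3*β^2*(1 + β) ∧
    (β ≠ 0 → β ≠ -1 → IsUnit M) := by
  intro M V₁ V₂ V₃
  have hdet : M.det = -3*β^2*(1 + β) := by
    simp [M, Matrix.det_fin_two_of]; ring
  have h1 : V₁ᵀ = !![1 + β, 3*β; 0, 3] := by
    ext i j; fin_cases i <;> fin_cases j <;> simp [V₁]
  have h2 : V₂ᵀ = !![1 + 2*β, 3*β; 1, 3] := by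
    ext i j; fin_cases i <;> fin_cases j <;> simp [V₂]
  have h3 : V₃ᵀ = !![1 + 3*β, 3*β; 2, 3] := by
    ext i j; fin_cases i <;> fin_cases j <;> simp [V₃]
  refine ⟨?_, ?_, ?_, ?_, hdet, ?_⟩
  · ext i j
    fin_cases i <;> fin_cases j <;> simp [M, Matrix.transpose]
  · rw [h1]; ext i j
    fin_cases i <;> fin_cases j <;>
      simp [M, V₁, Matrix.mul_apply, Fin.sum_univ_two] <;> ring
  · rw [h2]; ext i j
    fin_cases i <;> fin_cases j <;>
      simp [M, V₂, Matrix.mul_apply, Fin.sum_univ_two] <;> ring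
  · rw [h3]; ext i j
    fin_cases i <;> fin_cases j <;>
      simp [M, V₃, Matrix.mul_apply, Fin.sum_univ_two] <;> ring
  · intro h0 h1
    rw [Matrix.isUnit_iff_isUnit_det, hdet, isUnit_iff_ne_zero]
    intro h
    rcases mul_eq_zero.1 h with h' | h'
    · rcases mul_eq_zero.1 h' with h'' | h''
      · norm_num at h''
      · exact h0 (pow_eq_zero_iff two_ne_zero |>.1 h'')
    · exact h1 (by linarith)
end

section
/- Let β be a real number. Set M = !![3β², 3β; 3β, 4+β] (a symmetric 2×2 real matrix). Then for each of the three matrices V₁ = !![−1, 1; 3β, 3], V₂ = !![β−1, 2; 3β, 3], V₃ = !![2β−1, 3; 3β, 3] one has M * Vᵢ = Vᵢᵀ * M. Moreover det M = 3β²(1+β), so M is invertible whenever β ≠ 0 and β ≠ −1. (This is the existence of a natural dual for the jump transformation S of type [1,−1,1] in Theorem 1(2).) -/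
open Matrix

/-- Theorem 1(2): existence of a natural dual for the jump transformation `S`
of type `[1,−1,1]`: the symmetric matrix `M = !![3β², 3β; 3β, 4+β]`
intertwines each inverse-branch matrix with its transpose, has determinant
`3β²(1+β)`, and is invertible whenever `β ≠ 0` and `β ≠ −1`. -/
theorem natural_dual_type_one_negone_one (β : ℝ) :
    let M : Matrix (Fin 2) (Fin 2) ℝ := !![3*β^2, 3*β; 3*β, 4 + β]
    let V₁ : Matrix (Fin 2) (Fin 2) ℝ := !![-1, 1; 3*β, 3]
    let V₂ : Matrix (Fin 2) (Fin 2) ℝ := !![β - 1, 2; 3*β, 3]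
    let V₃ : Matrix (Fin 2) (Fin 2) ℝ := !![2*β - 1, 3; 3*β, 3]
    M.IsSymm ∧
    M * V₁ = V₁ᵀ * M ∧ M * V₂ = V₂ᵀ * M ∧ M * V₃ = V₃ᵀ * M ∧
    M.det = 3*β^2*(1 + β) ∧
    (β ≠ 0 → β ≠ -1 → IsUnit M) := by
  intro M V₁ V₂ V₃
  have hdet : M.det = 3*β^2*(1 + β) := by
    simp [M, Matrix.det_fin_two_of]; ring
  refine ⟨?_, ?_, ?_, ?_, hdet, ?_⟩
  · ext i j; fin_cases i <;> fin_cases j <;> simp [M, Matrix.IsSymm]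
  · ext i j; fin_cases i <;> fin_cases j <;>
      simp [M, V₁, Matrix.mul_apply, Fin.sum_univ_two, Matrix.transpose_apply, Matrix.vecHead, Matrix.vecTail] <;> ring
  · ext i j; fin_cases i <;> fin_cases j <;>
      simp [M, V₂, Matrix.mul_apply, Fin.sum_univ_two, Matrix.transpose_apply, Matrix.vecHead, Matrix.vecTail] <;> ring
  · ext i j; fin_cases i <;> fin_cases j <;>
      simp [M, V₃, Matrix.mul_apply, Fin.sum_univ_two, Matrix.transpose_apply, Matrix.vecHead, Matrix.vecTail] <;> ring
  · intro h0 h1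
    rw [Matrix.isUnit_iff_isUnit_det, hdet, isUnit_iff_ne_zero]
    intro h
    rcases mul_eq_zero.mp h with h | h
    · exact h0 (by nlinarith [sq_nonneg β])
    · exact h1 (by linarith)
end

section
/- Define h(y) = 1/((2 − β + 3βy)(2 + 3βy)). Let β and x be real numbers, and set d = 3 + 3βx, y₁ = (1+β)x/d, y₂ = (1 + (1+2β)x)/d, y₃ = (2 + (1+3β)x)/d. Assume d ≠ 0 and that 2 − β + 3βyᵢ ≠ 0 and 2 + 3βyᵢ ≠ 0 for i = 1,2,3, and that (2 − β + 3βx)(2 + 3βx) ≠ 0. Then h(x) = ((3+3β)/d²) · (h(y₁) + h(y₂) + h(y₃)). (This is the transfer-operator fixed-point equation showing that h is the invariant density of the jump transformation S of type [1,1,1], Theorem 1(1).) -/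
/-!
The three inverse branches of `S` are translates of one another, `y₂ = y₁ + 1/3` and
`y₃ = y₁ + 2/3`, and `h (y + k/3) = 1 / ((q + kβ) (q + (k+1)β))` with `q = 2 − β + 3βy`.
So the transfer-operator sum telescopes along the arithmetic progression `q, q+β, q+2β, q+3β`
to `3 / (q (q + 3β))`; at `y = y₁` one has `q = 3(2 − β + 3βx)/d` and
`q + 3β = 3(1 + β)(2 + 3βx)/d`, which turns the Jacobian times this sum into `h x`.
-/

open Finset

section
variable {K : Type*} [Field K]

theorem sum_range_one_div_mul_arith_succ {p δ : K} (n : ℕ) (hne : ∀ k ≤ n, p + k * δ ≠ 0) :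
    ∑ k ∈ range n, 1 / ((p + k * δ) * (p + (k + 1) * δ)) = n / (p * (p + n * δ)) := by
  induction n with
  | zero => simp
  | succ n ih =>
    have hp : p ≠ 0 := by simpa using hne 0 n.succ.zero_le
    have hn : p + n * δ ≠ 0 := hne n n.le_succ
    have hn' : p + (n + 1) * δ ≠ 0 := by exact_mod_cast hne (n + 1) le_rfl
    rw [sum_range_succ, ih fun k hk => hne k (hk.trans n.le_succ), Nat.cast_succ,
      div_add_div _ _ (mul_ne_zero hp hn) (mul_ne_zero hn hn'), div_eq_div_iff
        (mul_ne_zero (mul_ne_zero hp hn) (mul_ne_zero hn hn')) (mul_ne_zero hp hn')]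
    ring

def invariantDensity (β y : K) : K := 1 / ((2 - β + 3 * β * y) * (2 + 3 * β * y))

theorem invariantDensity_add_div_three [CharZero K] (β y k : K) :
    invariantDensity β (y + k / 3) =
      1 / ((2 - β + 3 * β * y + k * β) * (2 - β + 3 * β * y + (k + 1) * β)) := by
  rw [invariantDensity]
  congr 2 <;> ring

theorem sum_range_invariantDensity_add_div_three [CharZero K] (β y : K) (n : ℕ)
    (hne : ∀ k ≤ n, 2 - β + 3 * β * y + k * β ≠ 0) :
    ∑ k ∈ range n, invariantDensity β (y + k / 3) =
      n / ((2 - β + 3 * β * y) * (2 - β + 3 * β * y + n * β)) := by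
  simp only [invariantDensity_add_div_three]
  exact sum_range_one_div_mul_arith_succ n hne

end

/-- Theorem 1(1), invariance of the density: the function
`h(y) = 1/((2 − β + 3βy)(2 + 3βy))` satisfies the transfer-operator
fixed-point equation for the jump transformation `S` of type `[1,1,1]`. -/
theorem invariant_density_type_one_one_one (β x : ℝ) :
    let h : ℝ → ℝ := fun y => 1 / ((2 - β + 3*β*y) * (2 + 3*β*y))
    let d : ℝ := 3 + 3*β*x
    let y₁ : ℝ := (1 + β)*x / d
    let y₂ : ℝ := (1 + (1 + 2*β)*x) / d
    let y₃ : ℝ := (2 + (1 + 3*β)*x) / d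
    d ≠ 0 →
    (2 - β + 3*β*y₁ ≠ 0 ∧ 2 + 3*β*y₁ ≠ 0) →
    (2 - β + 3*β*y₂ ≠ 0 ∧ 2 + 3*β*y₂ ≠ 0) →
    (2 - β + 3*β*y₃ ≠ 0 ∧ 2 + 3*β*y₃ ≠ 0) →
    (2 - β + 3*β*x) * (2 + 3*β*x) ≠ 0 →
    h x = ((3 + 3*β) / d^2) * (h y₁ + h y₂ + h y₃) := by
  intro h d y₁ y₂ y₃ hd ⟨h₀, h₁⟩ ⟨_, h₂⟩ ⟨_, h₃⟩ hx
  have hy₂ : y₂ = y₁ + 1 / 3 := by rw [div_add' _ _ _ hd]; simp only [y₂, d]; ring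
  have hy₃ : y₃ = y₁ + 2 / 3 := by rw [div_add' _ _ _ hd]; simp only [y₃, d]; ring
  have hne : ∀ k : ℕ, k ≤ 3 → 2 - β + 3 * β * y₁ + k * β ≠ 0 := by
    intro k hk
    interval_cases k
    · simpa using h₀
    · convert h₁ using 1; push_cast; ring
    · convert h₂ using 1; rw [hy₂]; push_cast; ring
    · convert h₃ using 1; rw [hy₃]; push_cast; ring
  have hsum : h y₁ + h y₂ + h y₃ = ∑ k ∈ range 3, invariantDensity β (y₁ + k / 3) := by
    rw [hy₂, hy₃]; norm_num [sum_range_succ, h, invariantDensity]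
  have hq : 2 - β + 3 * β * y₁ = 3 * (2 - β + 3 * β * x) / d := by
    rw [eq_div_iff hd]; simp only [y₁]; field_simp; simp only [d]; ring
  have hq₃ : 2 - β + 3 * β * y₁ + 3 * β = 3 * ((1 + β) * (2 + 3 * β * x)) / d := by
    rw [hq, div_add' _ _ _ hd]; simp only [d]; ring
  have hβ : 1 + β ≠ 0 := by
    have := hne 3 le_rfl; push_cast at this; rw [hq₃] at this
    exact left_ne_zero_of_mul (right_ne_zero_of_mul (div_ne_zero_iff.mp this).1)
  obtain ⟨hP, hQ⟩ := mul_ne_zero_iff.mp hx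
  rw [hsum, sum_range_invariantDensity_add_div_three β y₁ 3 hne]
  push_cast
  rw [hq₃, hq]
  simp only [h]
  field_simp
end

section
/- Define h(y) = 1/((4 + β + 3βy)(4 + 3βy)). Let β and x be real numbers, and set d = 3 + 3βx, y₁ = (1 − x)/d, y₂ = (2 + (β−1)x)/d, y₃ = (3 + (2β−1)x)/d. Assume d ≠ 0 and that 4 + β + 3βyᵢ ≠ 0 and 4 + 3βyᵢ ≠ 0 for i = 1,2,3, and that (4 + β + 3βx)(4 + 3βx) ≠ 0. Then h(x) = ((3+3β)/d²) · (h(y₁) + h(y₂) + h(y₃)). (This is the transfer-operator fixed-point equation showing that h is the invariant density of the jump transformation S of type [1,−1,1], Theorem 1(2).) -/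
/-!
The three inverse branches of `S` are translates of one another, `y₂ = y₁ + 1/3` and
`y₃ = y₁ + 2/3`, so the linear factors `4 + 3βyᵢ` and `4 + β + 3βyᵢ` form one arithmetic
progression `a, a + β, a + 2β, a + 3β`. The sum `h(y₁) + h(y₂) + h(y₃)` therefore telescopes to
`3 / (a (a + 3β))`, and `a`, `a + 3β` are, up to the factor `3/d` (and `1 + β`), the two
factors of `h(x)`.
-/

theorem sum_range_one_div_mul_arith_succ_s3 (a δ : ℝ) (n : ℕ) (h : ∀ i ≤ n, a + i * δ ≠ 0) :
    ∑ i ∈ Finset.range n, 1 / ((a + (i + 1) * δ) * (a + i * δ)) = n / (a * (a + n * δ)) := by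
  induction n with
  | zero => simp
  | succ n ih =>
    have h₀ : a ≠ 0 := by simpa using h 0 (Nat.zero_le _)
    have hn : a + n * δ ≠ 0 := h n n.le_succ
    have hn₁ : a + (n + 1) * δ ≠ 0 := by exact_mod_cast h (n + 1) le_rfl
    rw [Finset.sum_range_succ, ih fun i hi => h i (hi.trans n.le_succ)]
    push_cast
    rw [div_add_div _ _ (mul_ne_zero h₀ hn) (mul_ne_zero hn₁ hn),
      div_eq_div_iff (mul_ne_zero (mul_ne_zero h₀ hn) (mul_ne_zero hn₁ hn)) (mul_ne_zero h₀ hn₁)]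
    ring

section InverseBranches

variable {β x : ℝ}

theorem inv_branch_two_eq_add_third (hx : 1 + β * x ≠ 0) :
    (2 + (β - 1) * x) / (3 + 3 * β * x) = (1 - x) / (3 + 3 * β * x) + 1 / 3 := by
  field_simp; ring

theorem inv_branch_three_eq_add_two_thirds (hx : 1 + β * x ≠ 0) :
    (3 + (2 * β - 1) * x) / (3 + 3 * β * x) = (1 - x) / (3 + 3 * β * x) + 2 / 3 := by
  field_simp; ring

theorem four_add_mul_inv_branch_one (hx : 1 + β * x ≠ 0) :
    4 + 3 * β * ((1 - x) / (3 + 3 * β * x)) = 3 * (4 + β + 3 * β * x) / (3 + 3 * β * x) := by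
  field_simp; ring

end InverseBranches

/-- Theorem 1(2), invariance of the density: the function
`h(y) = 1/((4 + β + 3βy)(4 + 3βy))` satisfies the transfer-operator
fixed-point equation for the jump transformation `S` of type `[1,−1,1]`. -/
theorem invariant_density_type_one_negone_one (β x : ℝ) :
    let h : ℝ → ℝ := fun y => 1 / ((4 + β + 3*β*y) * (4 + 3*β*y))
    let d : ℝ := 3 + 3*β*x
    let y₁ : ℝ := (1 - x) / d
    let y₂ : ℝ := (2 + (β - 1)*x) / d
    let y₃ : ℝ := (3 + (2*β - 1)*x) / d
    d ≠ 0 →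
    (4 + β + 3*β*y₁ ≠ 0 ∧ 4 + 3*β*y₁ ≠ 0) →
    (4 + β + 3*β*y₂ ≠ 0 ∧ 4 + 3*β*y₂ ≠ 0) →
    (4 + β + 3*β*y₃ ≠ 0 ∧ 4 + 3*β*y₃ ≠ 0) →
    (4 + β + 3*β*x) * (4 + 3*β*x) ≠ 0 →
    h x = ((3 + 3*β) / d^2) * (h y₁ + h y₂ + h y₃) := by
  intro h d y₁ y₂ y₃ hd ⟨h₁, h₀⟩ ⟨h₂, _⟩ ⟨h₃, _⟩ hx
  have hd₁ : 1 + β * x ≠ 0 := fun h0 => hd (by linear_combination 3 * h0)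
  have hy₂ : y₂ = y₁ + 1 / 3 := inv_branch_two_eq_add_third hd₁
  have hy₃ : y₃ = y₁ + 2 / 3 := inv_branch_three_eq_add_two_thirds hd₁
  have ha : 4 + 3 * β * y₁ = 3 * (4 + β + 3 * β * x) / d := four_add_mul_inv_branch_one hd₁
  set a := 4 + 3 * β * y₁ with ha_def
  have ha₃ : a + 3 * β = 3 * (1 + β) * (4 + 3 * β * x) / d := by
    rw [ha]; simp only [d]; field_simp; ring
  have hsum : h y₁ + h y₂ + h y₃ = ∑ i ∈ Finset.range 3, 1 / ((a + (i + 1) * β) * (a + i * β)) := by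
    simp only [Finset.sum_range_succ, Finset.sum_range_zero, h, hy₂, hy₃, ha_def]
    norm_num
    ring
  have hprog : ∀ i : ℕ, i ≤ 3 → a + i * β ≠ 0 := by
    intro i hi
    interval_cases i
    · simpa using h₀
    · simpa [ha_def, add_right_comm] using h₁
    · convert h₂ using 1; rw [hy₂]; push_cast; ring
    · convert h₃ using 1; rw [hy₃]; push_cast; ring
  have hβ : 1 + β ≠ 0 := by
    intro hβ
    simpa [ha₃, hβ] using hprog 3 le_rfl
  obtain ⟨hx₁, hx₂⟩ := mul_ne_zero_iff.mp hx
  rw [hsum, sum_range_one_div_mul_arith_succ_s3 a β 3 hprog]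
  push_cast
  rw [ha₃, ha]
  simp only [h, d] at hd ⊢
  field_simp
end

section
/- Let β be a real number with β ≠ 0 and β ≠ −1. If M is a symmetric 2×2 real matrix such that M * V = Vᵀ * M for each of the three matrices V₁ = !![−1, 1; 3β, 3], V₂ = !![β−1, 2; 3β, 3], V₃ = !![3β+1, 2; 3β, 3], then M = 0. (No natural dual exists for the jump transformation S of type [1,−1,−1]; part of Theorem 2.) -/
open Matrix

/-- Part of Theorem 2: no natural dual exists for the jump transformation `S`
of type `[1,−1,−1]`: the only symmetric matrix intertwining each
inverse-branch matrix with its transpose is the zero matrix. -/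
theorem no_natural_dual_type_one_negone_negone (β : ℝ) (hβ0 : β ≠ 0) (hβ1 : β ≠ -1)
    (M : Matrix (Fin 2) (Fin 2) ℝ) (hMsymm : M.IsSymm)
    (h₁ : M * !![-1, 1; 3*β, 3] = (!![-1, 1; 3*β, 3] : Matrix (Fin 2) (Fin 2) ℝ)ᵀ * M)
    (h₂ : M * !![β - 1, 2; 3*β, 3] = (!![β - 1, 2; 3*β, 3] : Matrix (Fin 2) (Fin 2) ℝ)ᵀ * M)
    (h₃ : M * !![3*β + 1, 2; 3*β, 3] = (!![3*β + 1, 2; 3*β, 3] : Matrix (Fin 2) (Fin 2) ℝ)ᵀ * M) :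
    M = 0 := by
  have hsym := congrFun (congrFun hMsymm 0) 1
  simp [Matrix.transpose_apply] at hsym
  have e1 := congrFun (congrFun h₁ 0) 1
  have e2 := congrFun (congrFun h₂ 0) 1
  have e3 := congrFun (congrFun h₃ 0) 1
  simp [Matrix.mul_apply, Fin.sum_univ_two, Matrix.transpose_apply, Matrix.vecHead, Matrix.vecTail, hsym] at e1 e2 e3
  have hb : M 0 1 = 0 := by
    have hfac : M 0 1 * (2 + 2 * β) = 0 := by nlinarith [e2, e3]
    rcases mul_eq_zero.mp hfac with h | h
    · exact h
    · exfalso; apply hβ1; linarith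
  have ha : M 0 0 = 0 := by nlinarith [e1, e2, hb]
  have hc : M 1 1 = 0 := by
    have hfac : 3 * β * M 1 1 = 0 := by nlinarith [e1, ha, hb]
    rcases mul_eq_zero.mp hfac with h | h
    · exfalso; apply hβ0; linarith
    · exact h
  ext i j
  fin_cases i <;> fin_cases j <;>
    simp [ha, hb, hc, hsym]
end

section
/- Let β be a real number with β ≠ 0 and β ≠ −1. If M is a symmetric 2×2 real matrix such that M * V = Vᵀ * M for each of the three matrices V₁ = !![1+β, 0; 3β, 3], V₂ = !![1+2β, 1; 3β, 3], V₃ = !![2β−1, 3; 3β, 3], then M = 0. (No natural dual exists for the jump transformation S of type [1,1,−1]; part of Theorem 2.) -/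
open Matrix

/-- Part of Theorem 2: no natural dual exists for the jump transformation `S`
of type `[1,1,−1]`: the only symmetric matrix intertwining each
inverse-branch matrix with its transpose is the zero matrix. -/
theorem no_natural_dual_type_one_one_negone (β : ℝ) (hβ0 : β ≠ 0) (hβ1 : β ≠ -1)
    (M : Matrix (Fin 2) (Fin 2) ℝ) (hMsymm : M.IsSymm)
    (h₁ : M * !![1 + β, 0; 3*β, 3] = (!![1 + β, 0; 3*β, 3] : Matrix (Fin 2) (Fin 2) ℝ)ᵀ * M)
    (h₂ : M * !![1 + 2*β, 1; 3*β, 3] = (!![1 + 2*β, 1; 3*β, 3] : Matrix (Fin 2) (Fin 2) ℝ)ᵀ * M)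
    (h₃ : M * !![2*β - 1, 3; 3*β, 3] = (!![2*β - 1, 3; 3*β, 3] : Matrix (Fin 2) (Fin 2) ℝ)ᵀ * M) :
    M = 0 := by
  have hb : M 1 0 = M 0 1 := by
    have := congrFun (congrFun hMsymm.eq 1) 0
    simpa using this.symm
  have e1 := congrFun (congrFun h₁ 0) 1
  have e2 := congrFun (congrFun h₂ 0) 1
  have e3 := congrFun (congrFun h₃ 0) 1
  simp [Matrix.mul_apply, Fin.sum_univ_two, Matrix.transpose_apply, Matrix.vecHead, Matrix.vecTail, hb] at e1 e2 e3
  have hb0 : M 0 1 = 0 := by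
    have h : M 0 1 * (β + 1) = 0 := by nlinarith [e1, e2, e3]
    rcases mul_eq_zero.mp h with h' | h'
    · exact h'
    · exact absurd (by linarith) hβ1
  have ha0 : M 0 0 = 0 := by nlinarith [e2, e3, hb0]
  have hd0 : M 1 1 = 0 := by
    have h : 3 * β * M 1 1 = 0 := by nlinarith [e1, hb0]
    have := mul_eq_zero.mp h
    rcases this with h' | h'
    · exact absurd (by linarith) hβ0
    · exact h'
  ext i j
  fin_cases i <;> fin_cases j <;> simp [ha0, hb0, hd0, hb]
end

section
/- Let β be a real number with β ≠ 0 and β ≠ −1. If M is a symmetric 2×2 real matrix such that M * V = Vᵀ * M for each of the three matrices V₁ = !![−1, 1; 3β, 3], V₂ = !![1+2β, 1; 3β, 3], V₃ = !![2β−1, 3; 3β, 3], then M = 0. (No natural dual exists for the jump transformation S of type [−1,1,−1]; part of Theorem 2.) -/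
open Matrix

/-- Part of Theorem 2: no natural dual exists for the jump transformation `S`
of type `[−1,1,−1]`: the only symmetric matrix intertwining each
inverse-branch matrix with its transpose is the zero matrix. -/
theorem no_natural_dual_type_negone_one_negone (β : ℝ) (hβ0 : β ≠ 0) (hβ1 : β ≠ -1)
    (M : Matrix (Fin 2) (Fin 2) ℝ) (hMsymm : M.IsSymm)
    (h₁ : M * !![-1, 1; 3*β, 3] = (!![-1, 1; 3*β, 3] : Matrix (Fin 2) (Fin 2) ℝ)ᵀ * M)
    (h₂ : M * !![1 + 2*β, 1; 3*β, 3] = (!![1 + 2*β, 1; 3*β, 3] : Matrix (Fin 2) (Fin 2) ℝ)ᵀ * M)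
    (h₃ : M * !![2*β - 1, 3; 3*β, 3] = (!![2*β - 1, 3; 3*β, 3] : Matrix (Fin 2) (Fin 2) ℝ)ᵀ * M) :
    M = 0 := by
  have hsym : M 1 0 = M 0 1 := hMsymm.apply 0 1
  have e1 := congrFun (congrFun h₁ 0) 1
  have e2 := congrFun (congrFun h₂ 0) 1
  have e3 := congrFun (congrFun h₃ 0) 1
  simp [Matrix.mul_apply, Fin.sum_univ_two, Matrix.transpose_apply, Matrix.cons_val',
    Matrix.cons_val_zero, Matrix.cons_val_one, Matrix.head_cons, Matrix.empty_val',
    Matrix.cons_val_fin_one, Matrix.head_fin_const, Matrix.vecHead] at e1 e2 e3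
  -- derive M 0 1 = 0
  have hb : M 0 1 = 0 := by
    have hβ : β + 1 ≠ 0 := fun h => hβ1 (by linarith)
    have : (2 + 2*β) * M 0 1 = 0 := by linarith
    have := mul_eq_zero.mp this
    rcases this with h | h
    · exact absurd (by linarith : β = -1) hβ1
    · exact h
  have ha : M 0 0 = 0 := by nlinarith [e1, e3, hb]
  have hc : M 1 1 = 0 := by
    have : 3 * β * M 1 1 = 0 := by nlinarith [e1, ha, hb]
    rcases mul_eq_zero.mp this with h | h
    · exact absurd (by linarith : β = 0) hβ0
    · exact h
  ext i j
  fin_cases i <;> fin_cases j <;>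
    simp [ha, hb, hc, hsym.trans hb]
end

section
/- Let β be a real number with β ≠ 0 and β ≠ −1. If M is a symmetric 2×2 real matrix such that M * V = Vᵀ * M for each of the three matrices V₁ = !![β+1, 0; 3β, 3], V₂ = !![β−1, 2; 3β, 3], V₃ = !![3β+1, 2; 3β, 3], then M = 0. (No natural dual exists for the jump transformation S of type [−1,−1,−1]; part of Theorem 2.) -/
open Matrix

/-- Part of Theorem 2: no natural dual exists for the jump transformation `S`
of type `[−1,−1,−1]`: the only symmetric matrix intertwining each
inverse-branch matrix with its transpose is the zero matrix. -/
theorem no_natural_dual_type_negone_negone_negone (β : ℝ) (hβ0 : β ≠ 0) (hβ1 : β ≠ -1)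
    (M : Matrix (Fin 2) (Fin 2) ℝ) (hMsymm : M.IsSymm)
    (h₁ : M * !![β + 1, 0; 3*β, 3] = (!![β + 1, 0; 3*β, 3] : Matrix (Fin 2) (Fin 2) ℝ)ᵀ * M)
    (h₂ : M * !![β - 1, 2; 3*β, 3] = (!![β - 1, 2; 3*β, 3] : Matrix (Fin 2) (Fin 2) ℝ)ᵀ * M)
    (h₃ : M * !![3*β + 1, 2; 3*β, 3] = (!![3*β + 1, 2; 3*β, 3] : Matrix (Fin 2) (Fin 2) ℝ)ᵀ * M) :
    M = 0 := by
  have hs : M 1 0 = M 0 1 := by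
    have := congrFun (congrFun hMsymm 0) 1
    simpa [Matrix.transpose_apply] using this
  have e1 := congrFun (congrFun h₁ 0) 1
  have e2 := congrFun (congrFun h₂ 0) 1
  have e3 := congrFun (congrFun h₃ 0) 1
  simp [Matrix.mul_apply, Fin.sum_univ_two, Matrix.transpose_apply, Matrix.vecHead] at e1 e2 e3
  have hb : M 0 1 = 0 := by
    have h2 : (β + 1) * M 0 1 = 0 := by nlinarith [e2, e3]
    have : β + 1 ≠ 0 := fun h => hβ1 (by linarith)
    exact (mul_eq_zero.1 h2).resolve_left this
  have hc : M 1 1 = 0 := by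
    have h1 : 3 * β * M 1 1 = 0 := by nlinarith [e1, hb]
    have : (3:ℝ) * β ≠ 0 := by positivity
    exact (mul_eq_zero.1 h1).resolve_left this
  have ha : M 0 0 = 0 := by nlinarith [e2, hb, hc]
  ext i j
  fin_cases i <;> fin_cases j <;> simp [ha, hb, hc, hs]
end

section
/- Let β be a real number with β ≠ 0 and β ≠ −1. If M is a symmetric 2×2 real matrix such that M * V = Vᵀ * M for each of the three matrices V₁ = !![β+1, 0; 3β, 3], V₂ = !![β−1, 2; 3β, 3], V₃ = !![2β−1, 3; 3β, 3], then M = 0. (No natural dual exists for the jump transformation S of type [−1,−1,1]; part of Theorem 2.) -/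
open Matrix

/-- Part of Theorem 2: no natural dual exists for the jump transformation `S`
of type `[−1,−1,1]`: the only symmetric matrix intertwining each
inverse-branch matrix with its transpose is the zero matrix. -/
theorem no_natural_dual_type_negone_negone_one (β : ℝ) (hβ0 : β ≠ 0) (hβ1 : β ≠ -1)
    (M : Matrix (Fin 2) (Fin 2) ℝ) (hMsymm : M.IsSymm)
    (h₁ : M * !![β + 1, 0; 3*β, 3] = (!![β + 1, 0; 3*β, 3] : Matrix (Fin 2) (Fin 2) ℝ)ᵀ * M)
    (h₂ : M * !![β - 1, 2; 3*β, 3] = (!![β - 1, 2; 3*β, 3] : Matrix (Fin 2) (Fin 2) ℝ)ᵀ * M)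
    (h₃ : M * !![2*β - 1, 3; 3*β, 3] = (!![2*β - 1, 3; 3*β, 3] : Matrix (Fin 2) (Fin 2) ℝ)ᵀ * M) :
    M = 0 := by
  rw [Matrix.IsSymm] at hMsymm
  have hb : M 1 0 = M 0 1 := by
    have := congrFun (congrFun hMsymm 0) 1
    simpa [Matrix.transpose_apply] using this
  have e1 := congrFun (congrFun h₁ 0) 1
  have e2 := congrFun (congrFun h₂ 0) 1
  have e3 := congrFun (congrFun h₃ 0) 1
  simp [Matrix.mul_apply, Fin.sum_univ_two, Matrix.vecHead, Matrix.transpose_apply, hb] at e1 e2 e3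
  -- from e2 - e1 and e3 - e2: a = -b and a = β b, so (β+1) b = 0
  have hbne : β + 1 ≠ 0 := by intro h; apply hβ1; linarith
  have hB : M 0 1 = 0 := by
    have : (β + 1) * M 0 1 = 0 := by nlinarith [e1, e2, e3]
    exact (mul_eq_zero.mp this).resolve_left hbne
  have hA : M 0 0 = 0 := by nlinarith [e2, e3, hB]
  have hD : M 1 1 = 0 := by
    have : 3 * β * M 1 1 = 0 := by nlinarith [e1, hB]
    have := mul_eq_zero.mp this
    rcases this with h | h
    · rcases mul_eq_zero.mp h with h' | h'
      · norm_num at h'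
      · exact absurd h' hβ0
    · exact h
  ext i j
  fin_cases i <;> fin_cases j <;>
    simp [hA, hB, hD, hb]
end

section
/- Let β be a real number with β ≠ 0 and β ≠ −1. If M is a symmetric 2×2 real matrix such that M * V = Vᵀ * M for each of the three matrices V₁ = !![−1, 1; 3β, 3], V₂ = !![1+2β, 1; 3β, 3], V₃ = !![3β+1, 2; 3β, 3], then M = 0. (No natural dual exists for the jump transformation S of type [−1,1,1]; part of Theorem 2.) -/
open Matrix

/-- Part of Theorem 2: no natural dual exists for the jump transformation `S`
of type `[−1,1,1]`: the only symmetric matrix intertwining each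
inverse-branch matrix with its transpose is the zero matrix. -/
theorem no_natural_dual_type_negone_one_one (β : ℝ) (hβ0 : β ≠ 0) (hβ1 : β ≠ -1)
    (M : Matrix (Fin 2) (Fin 2) ℝ) (hMsymm : M.IsSymm)
    (h₁ : M * !![-1, 1; 3*β, 3] = (!![-1, 1; 3*β, 3] : Matrix (Fin 2) (Fin 2) ℝ)ᵀ * M)
    (h₂ : M * !![1 + 2*β, 1; 3*β, 3] = (!![1 + 2*β, 1; 3*β, 3] : Matrix (Fin 2) (Fin 2) ℝ)ᵀ * M)
    (h₃ : M * !![3*β + 1, 2; 3*β, 3] = (!![3*β + 1, 2; 3*β, 3] : Matrix (Fin 2) (Fin 2) ℝ)ᵀ * M) :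
    M = 0 := by
  have hb : M 1 0 = M 0 1 := by
    have := congrFun (congrFun hMsymm.eq 0) 1
    simpa [Matrix.transpose_apply] using this
  have e1 := congrFun (congrFun h₁ 0) 1
  have e2 := congrFun (congrFun h₂ 0) 1
  have e3 := congrFun (congrFun h₃ 0) 1
  simp [Matrix.mul_apply, Fin.sum_univ_two, Matrix.transpose_apply, Matrix.cons_val_zero, Matrix.cons_val_one, Matrix.head_cons, Matrix.vecHead, Matrix.vecTail, hb] at e1 e2 e3
  set a := M 0 0 with ha
  set b := M 0 1 with hbb
  set d := M 1 1 with hd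
  have hβ1' : β + 1 ≠ 0 := fun h => hβ1 (by linarith)
  have hb0 : b = 0 := by
    have : (2 + 2*β) * b = 0 := by nlinarith [e1, e2]
    have h2 : (2 : ℝ) + 2*β ≠ 0 := fun h => hβ1' (by linarith)
    exact (mul_eq_zero.mp this).resolve_left h2
  have ha0 : a = 0 := by nlinarith [e1, e3, hb0]
  have hd0 : d = 0 := by
    have : 3*β*d = 0 := by nlinarith [e1, hb0, ha0]
    have h3 : (3:ℝ)*β ≠ 0 := by simp [hβ0]
    exact (mul_eq_zero.mp this).resolve_left h3
  ext i j
  fin_cases i <;> fin_cases j <;>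
    simp_all [ha0, hb0, hd0, hb]
end

section
/- Let p₁, p₂, β be real numbers with 0 < p₁ < p₂ < 1, β ≠ 0 and β ≠ −1. Then there exists a nonzero symmetric 2×2 real matrix M with M * V = Vᵀ * M for each of the three matrices V₁ = !![p₁(1+β), 0; β, 1], V₂ = !![p₂ − p₁ + p₂β, p₁; β, 1], V₃ = !![1 − p₂ + β, p₂; β, 1] if and only if p₁² + p₂² − p₁p₂ − p₁ = 0. (Theorem 3 for type [1,1,1]: the jump transformation S has a natural dual exactly when p₁² + p₂² − p₁p₂ − p₁ = 0.) -/
open Matrix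


lemma transpose_fin_two_aux (a b c d : ℝ) :
    (!![a, b; c, d] : Matrix (Fin 2) (Fin 2) ℝ)ᵀ = !![a, c; b, d] := by
  ext i j
  fin_cases i <;> fin_cases j <;> simp [Matrix.transpose_apply]

/-- Theorem 3 for type `[1,1,1]`: for a general partition `0 < p₁ < p₂ < 1`
the jump transformation `S` has a natural dual (a nonzero symmetric matrix
intertwining each inverse-branch matrix with its transpose) if and only if
`p₁² + p₂² − p₁p₂ − p₁ = 0`. -/
theorem natural_dual_iff_type_one_one_one (p₁ p₂ β : ℝ)
    (hp₁ : 0 < p₁) (hp₁₂ : p₁ < p₂) (hp₂ : p₂ < 1)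
    (hβ0 : β ≠ 0) (hβ1 : β ≠ -1) :
    (∃ M : Matrix (Fin 2) (Fin 2) ℝ, M ≠ 0 ∧ M.IsSymm ∧
      M * !![p₁*(1 + β), 0; β, 1] = (!![p₁*(1 + β), 0; β, 1] : Matrix (Fin 2) (Fin 2) ℝ)ᵀ * M ∧
      M * !![p₂ - p₁ + p₂*β, p₁; β, 1] = (!![p₂ - p₁ + p₂*β, p₁; β, 1] : Matrix (Fin 2) (Fin 2) ℝ)ᵀ * M ∧
      M * !![1 - p₂ + β, p₂; β, 1] = (!![1 - p₂ + β, p₂; β, 1] : Matrix (Fin 2) (Fin 2) ℝ)ᵀ * M) ↔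
    p₁^2 + p₂^2 - p₁*p₂ - p₁ = 0 := by
  have h1β : (1:ℝ) + β ≠ 0 := by
    intro h; apply hβ1; linarith
  constructor
  · rintro ⟨M, hM0, hMs, h1, h2, h3⟩
    have hsym : M 1 0 = M 0 1 := hMs.apply 0 1
    have e1 := congrFun (congrFun h1 0) 1
    have e2 := congrFun (congrFun h2 0) 1
    have e3 := congrFun (congrFun h3 0) 1
    simp [transpose_fin_two_aux, Matrix.mul_apply, Fin.sum_univ_two, Matrix.vecHead, Matrix.transpose_apply] at e1 e2 e3
    by_contra ht
    have hb : M 0 1 * ((1+β) * (p₁^2 + p₂^2 - p₁*p₂ - p₁)) = 0 := by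
      linear_combination p₁ * e3 - p₂ * e2 + (p₂ - p₁) * e1
    have hb0 : M 0 1 = 0 := by
      rcases mul_eq_zero.mp hb with h | h
      · exact h
      · exact absurd h (mul_ne_zero h1β ht)
    have ha0 : M 0 0 = 0 := by
      have : M 0 0 * p₁ = 0 := by linear_combination e2 - e1 + (p₂ - p₁ + p₂*β - p₁*(1+β)) * hb0
      rcases mul_eq_zero.mp this with h | h
      · exact h
      · exact absurd h hp₁.ne'
    have hd0 : M 1 1 = 0 := by
      have : β * M 1 1 = 0 := by linear_combination -e1 + (1 - p₁*(1+β)) * hb0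
      rcases mul_eq_zero.mp this with h | h
      · exact absurd h hβ0
      · exact h
    apply hM0
    ext i j
    fin_cases i <;> fin_cases j <;>
      simp [ha0, hb0, hd0, hsym.trans hb0]
  · intro h
    refine ⟨!![-β*(p₁ + (p₁-p₂)*(1+β)), β*p₁; β*p₁, p₁*(1 - p₁*(1+β))], ?_, ?_, ?_, ?_, ?_⟩
    · intro hM
      have := congrFun (congrFun hM 0) 1
      simp at this
      rcases this with h' | h'
      · exact hβ0 h'
      · exact hp₁.ne' h'
    · rw [Matrix.IsSymm]
      ext i j
      fin_cases i <;> fin_cases j <;> simp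
    · ext i j
      fin_cases i <;> fin_cases j <;>
        simp [transpose_fin_two_aux, Matrix.mul_apply, Fin.sum_univ_two, Matrix.vecHead, Matrix.transpose_apply] <;> ring
    · ext i j
      fin_cases i <;> fin_cases j <;>
        simp [transpose_fin_two_aux, Matrix.mul_apply, Fin.sum_univ_two, Matrix.vecHead, Matrix.transpose_apply] <;> ring
    · ext i j
      fin_cases i <;> fin_cases j <;>
        simp [transpose_fin_two_aux, Matrix.mul_apply, Fin.sum_univ_two, Matrix.vecHead, Matrix.transpose_apply] <;>
        (first | ring1 | linear_combination (β*(1+β)) * h | linear_combination (-(β*(1+β))) * h | linear_combination (2*β*(1+β)) * h | linear_combination (-(2*β*(1+β))) * h)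
end

section
/- Let (X, Σ) be a measurable space, T : X → X a measurable map, and A ∈ Σ a measurable set. Define the jump transformation S : X → X by S x = T (T x) for x ∈ A and S x = T x for x ∉ A (S is measurable). Let ν be a measure on X that is invariant under S, i.e. ν(S⁻¹ E) = ν(E) for all E ∈ Σ. Define μ by μ(E) = ν(E) + ν(T⁻¹ E ∩ A) for E ∈ Σ. Then μ is invariant under T, i.e. μ(T⁻¹ E) = μ(E) for all E ∈ Σ. -/
open MeasureTheory

/-- The jump-transformation device: if `ν` is invariant under the jump
transformation `S` (equal to `T ∘ T` on `A` and to `T` off `A`), then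
`μ(E) = ν(E) + ν(T⁻¹E ∩ A)` defines a `T`-invariant set function. -/
theorem jump_transformation_invariant_measure
    {X : Type*} [MeasurableSpace X] (T : X → X) (hT : Measurable T)
    (A : Set X) (hA : MeasurableSet A)
    (S : X → X) (hSA : ∀ x ∈ A, S x = T (T x)) (hSA' : ∀ x ∉ A, S x = T x)
    (hS : Measurable S)
    (ν : Measure X) (hν : ∀ E : Set X, MeasurableSet E → ν (S ⁻¹' E) = ν E) :
    let μ : Set X → ENNReal := fun E => ν E + ν (T ⁻¹' E ∩ A)
    ∀ E : Set X, MeasurableSet E → μ (T ⁻¹' E) = μ E := by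
  intro μ E hE
  have hpre : S ⁻¹' E = (T ⁻¹' (T ⁻¹' E) ∩ A) ∪ (T ⁻¹' E ∩ Aᶜ) := by
    ext x
    by_cases hx : x ∈ A
    · simp [Set.mem_preimage, hSA x hx, hx]
    · simp [Set.mem_preimage, hSA' x hx, hx]
  have hE1 : MeasurableSet (T ⁻¹' E) := hT hE
  have hE2 : MeasurableSet (T ⁻¹' (T ⁻¹' E)) := hT hE1
  have hdisj : Disjoint (T ⁻¹' (T ⁻¹' E) ∩ A) (T ⁻¹' E ∩ Aᶜ) :=
    (disjoint_compl_right.mono Set.inter_subset_right Set.inter_subset_right)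
  have h1 : ν E = ν (T ⁻¹' (T ⁻¹' E) ∩ A) + ν (T ⁻¹' E ∩ Aᶜ) := by
    rw [← hν E hE, hpre, measure_union hdisj (hE1.inter hA.compl)]
  have h2 : ν (T ⁻¹' E) = ν (T ⁻¹' E ∩ A) + ν (T ⁻¹' E ∩ Aᶜ) := by
    rw [← measure_union (disjoint_compl_right.mono Set.inter_subset_right
      Set.inter_subset_right) (hE1.inter hA.compl), Set.inter_union_compl]
  show ν (T ⁻¹' E) + ν (T ⁻¹' (T ⁻¹' E) ∩ A) = ν E + ν (T ⁻¹' E ∩ A)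
  rw [h1, h2]
  ring
end
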